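/- arXiv:2210.07951 — 3 statements merged into one kernel-verified Lean document; each statement's English description precedes it below -/
import Mathlib

section
/- For an integer b ≥ 2 and positive integers ℓ and ℓ', the smallest positive integer n such that (b^ℓ − 1)(b^{ℓ'} − 1) divides b^n − 1 is n = (b^{gcd(ℓ,ℓ')} − 1) · lcm(ℓ, ℓ'). -/
/-!
Write `N k = b ^ k - 1`, `d = gcd ℓ ℓ'`, `L = lcm ℓ ℓ'`, and `ℓ = j₁ d`, `ℓ' = j₂ d` with
`j₁, j₂` coprime. Then `N ℓ * N ℓ' * r = N d * N L` for some `r` coprime to `N d`: divisibility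
comes from `gcd (N ℓ) (N ℓ') = N d` and `lcm (N ℓ) (N ℓ') ∣ N L`, and coprimality from the
valuation identity `v_p (x ^ j₁ - 1) + v_p (x ^ j₂ - 1) = v_p (x - 1) + v_p (x ^ (j₁ j₂) - 1)` for
`x = b ^ d` and every prime `p ∣ x - 1`, which holds because `p` divides at most one of `j₁, j₂`
and `v_p (y ^ j - 1) = v_p (y - 1)` whenever `p ∣ y - 1` and `p ∤ j`.

If `N ℓ * N ℓ' ∣ N n` then `L ∣ n`, say `n = L m`, and `N n = N L * (1 + y + ⋯ + y ^ (m - 1))`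
with `y = b ^ L`. Cancelling `N L` and the factor `r`, the condition becomes
`N d ∣ 1 + y + ⋯ + y ^ (m - 1)`, and this sum is `≡ m` modulo `N L`, a multiple of `N d`.
So `N ℓ * N ℓ' ∣ N n` if and only if `N d * L ∣ n`.
-/

open Finset

namespace Nat

variable {x m : ℕ}

lemma pow_sub_one_eq_sub_one_mul_geom_sum (hx : 1 ≤ x) (m : ℕ) :
    x ^ m - 1 = (x - 1) * ∑ i ∈ range m, x ^ i := by
  rw [mul_comm, geom_sum_mul_of_one_le hx]

lemma geom_sum_modEq_sub_one (hx : 1 ≤ x) (m : ℕ) :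
    ∑ i ∈ range m, x ^ i ≡ m [MOD x - 1] :=
  calc ∑ i ∈ range m, x ^ i ≡ ∑ i ∈ range m, 1 ^ i [MOD x - 1] :=
        ModEq.sum fun i _ => (modEq_sub hx).pow i
    _ = m := by simp

lemma pow_sub_one_dvd_pow_sub_one_iff (hx : 1 < x) {k n : ℕ} :
    x ^ k - 1 ∣ x ^ n - 1 ↔ k ∣ n := by
  rw [← gcd_eq_left_iff_dvd, pow_sub_one_gcd_pow_sub_one, ← gcd_eq_left_iff_dvd]
  exact ⟨fun h => Nat.pow_right_injective hx (sub_one_cancel (pow_pos (by omega) _)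
    (pow_pos (by omega) _) h), fun h => by rw [h]⟩

lemma padicValNat_pow_sub_one_of_not_dvd {p : ℕ} [Fact p.Prime] (hx : 1 ≤ x)
    (hpx : p ∣ x - 1) (hpm : ¬p ∣ m) :
    padicValNat p (x ^ m - 1) = padicValNat p (x - 1) := by
  obtain rfl | hx := hx.eq_or_lt
  · simp
  have hS : ¬p ∣ ∑ i ∈ range m, x ^ i := by
    rwa [(geom_sum_modEq_sub_one hx.le m).dvd_iff hpx]
  rw [pow_sub_one_eq_sub_one_mul_geom_sum hx.le,
    padicValNat.mul (by omega) fun h => hS (by rw [h]; exact dvd_zero p),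
    padicValNat.eq_zero_of_not_dvd hS, add_zero]

lemma padicValNat_pow_sub_one_add_pow_sub_one {p j₁ j₂ : ℕ} [hp : Fact p.Prime] (hx : 1 ≤ x)
    (hpx : p ∣ x - 1) (hj : Coprime j₁ j₂) :
    padicValNat p (x ^ j₁ - 1) + padicValNat p (x ^ j₂ - 1) =
      padicValNat p (x - 1) + padicValNat p (x ^ (j₁ * j₂) - 1) := by
  wlog hj₂ : ¬p ∣ j₂ generalizing j₁ j₂
  · have hj₁ : ¬p ∣ j₁ := fun hj₁ =>
      hp.out.one_lt.ne' (eq_one_of_dvd_coprimes hj hj₁ (not_not.mp hj₂))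
    rw [add_comm, mul_comm]
    exact this hj.symm hj₁
  rw [padicValNat_pow_sub_one_of_not_dvd hx hpx hj₂, pow_mul,
    padicValNat_pow_sub_one_of_not_dvd (one_le_pow _ _ hx)
      (hpx.trans (sub_one_dvd_pow_sub_one x j₁)) hj₂, add_comm]

lemma coprime_of_padicValNat_mul_eq {a r e : ℕ} (ha : a ≠ 0) (hr : r ≠ 0)
    (h : ∀ p, p.Prime → p ∣ e → padicValNat p (a * r) = padicValNat p a) : Coprime r e :=
  coprime_of_dvd fun p hp hpr hpe => by
    have := Fact.mk hp
    have hv := h p hp hpe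
    rw [padicValNat.mul ha hr] at hv
    have := one_le_padicValNat_of_dvd hr hpr
    omega

lemma pow_sub_one_ne_zero (hx : 1 < x) (hm : m ≠ 0) : x ^ m - 1 ≠ 0 :=
  Nat.sub_ne_zero_of_lt (one_lt_pow hm hx)

lemma exists_pow_sub_one_mul_pow_sub_one_mul_eq (hx : 1 < x) {j₁ j₂ : ℕ} (hj : Coprime j₁ j₂)
    (hj₁ : j₁ ≠ 0) (hj₂ : j₂ ≠ 0) :
    ∃ r, (x ^ j₁ - 1) * (x ^ j₂ - 1) * r = (x - 1) * (x ^ (j₁ * j₂) - 1) ∧ Coprime r (x - 1) := by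
  have hdvd : (x ^ j₁ - 1) * (x ^ j₂ - 1) ∣ (x - 1) * (x ^ (j₁ * j₂) - 1) := by
    rw [← gcd_mul_lcm, pow_sub_one_gcd_pow_sub_one, hj.gcd_eq_one, pow_one]
    exact mul_dvd_mul_left _ <| lcm_dvd (pow_sub_one_dvd_pow_sub_one x (dvd_mul_right _ _))
      (pow_sub_one_dvd_pow_sub_one x (dvd_mul_left _ _))
  obtain ⟨r, hr⟩ := hdvd
  have hP : (x ^ j₁ - 1) * (x ^ j₂ - 1) ≠ 0 :=
    mul_ne_zero (pow_sub_one_ne_zero hx hj₁) (pow_sub_one_ne_zero hx hj₂)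
  have hr0 : r ≠ 0 := by
    rintro rfl
    rw [mul_zero, mul_eq_zero] at hr
    exact hr.elim (by omega) (pow_sub_one_ne_zero hx (mul_ne_zero hj₁ hj₂))
  refine ⟨r, hr.symm, coprime_of_padicValNat_mul_eq hP hr0 fun p hp hpx => ?_⟩
  have := Fact.mk hp
  rw [← hr, padicValNat.mul (by omega) (pow_sub_one_ne_zero hx (mul_ne_zero hj₁ hj₂)),
    padicValNat.mul (pow_sub_one_ne_zero hx hj₁) (pow_sub_one_ne_zero hx hj₂),
    padicValNat_pow_sub_one_add_pow_sub_one hx.le hpx hj]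

lemma dvd_pow_sub_one_iff_of_mul_eq {a r d y : ℕ} (hy : 1 < y) (h : a * r = d * (y - 1))
    (hrd : Coprime r d) (hdy : d ∣ y - 1) (m : ℕ) :
    a ∣ y ^ m - 1 ↔ d ∣ m := by
  have hr : r ≠ 0 := by
    rintro rfl
    rw [mul_zero, eq_comm, mul_eq_zero] at h
    rcases h with rfl | h
    · have := zero_dvd_iff.mp hdy
      omega
    · omega
  set S := ∑ i ∈ range m, y ^ i
  calc a ∣ y ^ m - 1 ↔ a * r ∣ (y - 1) * S * r := by
        rw [pow_sub_one_eq_sub_one_mul_geom_sum hy.le, Nat.mul_dvd_mul_iff_right (by omega)]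
    _ ↔ d ∣ r * S := by
        rw [h, mul_comm d, mul_assoc, mul_comm S, Nat.mul_dvd_mul_iff_left (by omega)]
    _ ↔ d ∣ S := hrd.symm.dvd_mul_left
    _ ↔ d ∣ m := (geom_sum_modEq_sub_one hy.le m).dvd_iff hdy

theorem pow_sub_one_mul_pow_sub_one_dvd_pow_sub_one_iff {b ℓ ℓ' n : ℕ} (hb : 1 < b)
    (hℓ : ℓ ≠ 0) (hℓ' : ℓ' ≠ 0) :
    (b ^ ℓ - 1) * (b ^ ℓ' - 1) ∣ b ^ n - 1 ↔ (b ^ gcd ℓ ℓ' - 1) * lcm ℓ ℓ' ∣ n := by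
  obtain ⟨j₁, j₂, hj, hℓj, hℓ'j⟩ := exists_coprime ℓ ℓ'
  set g := gcd ℓ ℓ'
  have hL : g * (j₁ * j₂) = lcm ℓ ℓ' := by
    rw [hℓj, hℓ'j, lcm_mul_right, hj.lcm_eq_mul, mul_comm]
  obtain ⟨r, hr, hrg⟩ := exists_pow_sub_one_mul_pow_sub_one_mul_eq (one_lt_pow
    (gcd_pos_of_pos_left ℓ' (pos_of_ne_zero hℓ)).ne' hb) hj
    (left_ne_zero_of_mul (hℓj ▸ hℓ)) (left_ne_zero_of_mul (hℓ'j ▸ hℓ'))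
  rw [← pow_mul, ← pow_mul, ← pow_mul, hL, mul_comm g, ← hℓj, mul_comm g, ← hℓ'j] at hr
  have hcancel := dvd_pow_sub_one_iff_of_mul_eq (one_lt_pow (lcm_ne_zero hℓ hℓ') hb) hr hrg
    (pow_sub_one_dvd_pow_sub_one b ((gcd_dvd_left ℓ ℓ').trans (dvd_lcm_left ℓ ℓ')))
  constructor
  · intro h
    obtain ⟨m, rfl⟩ : lcm ℓ ℓ' ∣ n := lcm_dvd
      ((pow_sub_one_dvd_pow_sub_one_iff hb).mp ((dvd_mul_right _ _).trans h))
      ((pow_sub_one_dvd_pow_sub_one_iff hb).mp ((dvd_mul_left _ _).trans h))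
    rw [pow_mul, hcancel] at h
    rw [mul_comm (lcm ℓ ℓ')]
    exact mul_dvd_mul_right h _
  · rintro ⟨k, rfl⟩
    rw [mul_comm (b ^ g - 1), mul_assoc, pow_mul, hcancel]
    exact dvd_mul_right _ _

end Nat

theorem least_product_period (b : ℤ) (hb : 2 ≤ b) (ℓ ℓ' : ℕ) (hℓ : 0 < ℓ) (hℓ' : 0 < ℓ') :
    IsLeast {n : ℕ | 0 < n ∧ (b ^ ℓ - 1) * (b ^ ℓ' - 1) ∣ b ^ n - 1}
      ((b.toNat ^ Nat.gcd ℓ ℓ' - 1) * Nat.lcm ℓ ℓ') := by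
  lift b to ℕ using (by omega)
  have hb' : 1 < b := by omega
  have hcast (k : ℕ) : (b : ℤ) ^ k - 1 = ((b ^ k - 1 : ℕ) : ℤ) := by
    rw [Nat.cast_sub (Nat.one_le_pow _ _ (by omega))]
    push_cast
    rfl
  simp only [hcast, ← Nat.cast_mul, Int.natCast_dvd_natCast, Int.toNat_natCast,
    Nat.pow_sub_one_mul_pow_sub_one_dvd_pow_sub_one_iff hb' hℓ.ne' hℓ'.ne']
  have hpos : 0 < (b ^ Nat.gcd ℓ ℓ' - 1) * Nat.lcm ℓ ℓ' :=
    Nat.mul_pos (Nat.sub_pos_of_lt (Nat.one_lt_pow (Nat.gcd_pos_of_pos_left ℓ' hℓ).ne' hb'))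
      (Nat.lcm_pos hℓ hℓ')
  exact ⟨⟨hpos, dvd_rfl⟩, fun n ⟨hn, hdvd⟩ => Nat.le_of_dvd hn hdvd⟩
end

section
/- Let b ≥ 2 and let ℓ, ℓ' be positive integers with d = gcd(ℓ, ℓ') and a' = ℓ'/d. Then Σ_{0 ≤ j < k·a'} b^{(ℓ·j mod ℓ')} = k · (b^{ℓ'} − 1)/(b^d − 1) for every positive integer k. -/
theorem sum_pow_mod_eq (b ℓ ℓ' : ℕ) (hb : 2 ≤ b) (hℓ : 0 < ℓ) (hℓ' : 0 < ℓ')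
    (k : ℕ) (hk : 0 < k) :
    ∑ j ∈ Finset.range (k * (ℓ' / Nat.gcd ℓ ℓ')), b ^ ((ℓ * j) % ℓ') =
      k * ((b ^ ℓ' - 1) / (b ^ Nat.gcd ℓ ℓ' - 1)) := by
  set d := Nat.gcd ℓ ℓ' with hd
  set m := ℓ / d with hm
  set a := ℓ' / d with ha
  have hd0 : 0 < d := Nat.gcd_pos_of_pos_left _ hℓ
  have hℓeq : ℓ = d * m := (Nat.div_mul_cancel (Nat.gcd_dvd_left ℓ ℓ')).symm.trans (mul_comm _ _)
  have hℓ'eq : ℓ' = d * a := (Nat.div_mul_cancel (Nat.gcd_dvd_right ℓ ℓ')).symm.trans (mul_comm _ _)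
  have ha0 : 0 < a := Nat.div_pos (Nat.le_of_dvd hℓ' (Nat.gcd_dvd_right ℓ ℓ')) hd0
  have hcop : Nat.Coprime m a := Nat.coprime_div_gcd_div_gcd hd0
  -- Step A: rewrite the exponent
  have hexp : ∀ j, (ℓ * j) % ℓ' = d * ((m * j) % a) := by
    intro j
    rw [hℓeq, hℓ'eq, mul_assoc, Nat.mul_mod_mul_left]
  -- Step B: sum over one period
  have hinj : Set.InjOn (fun j => (m * j) % a) (Finset.range a) := by
    intro x hx y hy hxy
    simp only [Finset.coe_range, Set.mem_Iio] at hx hy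
    have : x % a = y % a := by
      have h1 : m * x ≡ m * y [MOD a] := hxy
      exact (Nat.ModEq.cancel_left_of_coprime (by rw [Nat.gcd_comm]; exact hcop) h1)
    rwa [Nat.mod_eq_of_lt hx, Nat.mod_eq_of_lt hy] at this
  have himg : (Finset.range a).image (fun j => (m * j) % a) = Finset.range a := by
    apply Finset.eq_of_subset_of_card_le
    · intro x hx
      simp only [Finset.mem_image, Finset.mem_range] at hx ⊢
      obtain ⟨j, _, rfl⟩ := hx
      exact Nat.mod_lt _ ha0
    · rw [Finset.card_image_of_injOn hinj]
  have hper : ∑ j ∈ Finset.range a, b ^ ((ℓ * j) % ℓ') = ∑ i ∈ Finset.range a, (b ^ d) ^ i := by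
    conv_rhs => rw [← himg]
    rw [Finset.sum_image hinj]
    apply Finset.sum_congr rfl
    intro j _
    rw [hexp, pow_mul]
  -- Step D: geometric sum value
  have hx2 : 2 ≤ b ^ d := le_trans hb (Nat.le_self_pow hd0.ne' b)
  have hgeom : ∑ i ∈ Finset.range a, (b ^ d) ^ i = (b ^ ℓ' - 1) / (b ^ d - 1) := by
    have hmul : (∑ i ∈ Finset.range a, (b ^ d) ^ i) * (b ^ d - 1) = (b ^ d) ^ a - 1 :=
      geom_sum_mul_of_one_le (by omega) a
    have hpow : (b ^ d) ^ a = b ^ ℓ' := by rw [← pow_mul, ← hℓ'eq]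
    rw [hpow] at hmul
    exact Nat.eq_div_of_mul_eq_left (by omega) hmul
  -- Step C: periodicity over k copies
  have hshift : ∀ q j, (ℓ * (q * a + j)) % ℓ' = (ℓ * j) % ℓ' := by
    intro q j
    have : ℓ * (q * a + j) = ℓ * j + (q * m) * ℓ' := by rw [hℓ'eq, hℓeq]; ring
    rw [this, Nat.add_mul_mod_self_right]
  have hmain : ∀ K, ∑ j ∈ Finset.range (K * a), b ^ ((ℓ * j) % ℓ') =
      K * ∑ j ∈ Finset.range a, b ^ ((ℓ * j) % ℓ') := by
    intro K
    induction K with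
    | zero => simp
    | succ n ih =>
      rw [Nat.succ_mul, Finset.sum_range_add, ih, Nat.succ_mul]
      congr 1
      apply Finset.sum_congr rfl
      intro j _
      rw [hshift]
  rw [hmain k, hper, hgeom]
end

section
/- For every positive even integer ℓ, the repunit r_ℓ = (10^ℓ − 1)/9 is divisible by 121 if and only if ℓ/2 is divisible by 11. -/
/-!
In base `b`, the repunit of even length `2m` factors as `r_{2m} = (b + 1) * ∑_{i < m} (b²)^i`,
and since `b² ≡ 1 (mod b + 1)` the second factor is `≡ m (mod b + 1)`. Hence
`(b + 1)² ∣ r_{2m}` exactly when `b + 1 ∣ m`; for `b = 10` this is `121 ∣ r_{2m} ↔ 11 ∣ m`.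
-/

open Finset

namespace Nat

theorem geom_sum_modEq_of_modEq_one {a n : ℕ} (ha : a ≡ 1 [MOD n]) (m : ℕ) :
    ∑ i ∈ range m, a ^ i ≡ m [MOD n] :=
  calc ∑ i ∈ range m, a ^ i ≡ ∑ i ∈ range m, 1 ^ i [MOD n] :=
        ModEq.sum fun i _ => ha.pow i
    _ = m := by simp

theorem sq_modEq_one_add_one (b : ℕ) : b ^ 2 ≡ 1 [MOD b + 1] := by
  rw [modEq_iff_dvd]
  exact ⟨1 - b, by push_cast; ring⟩

theorem repunit_two_mul {b : ℕ} (hb : 2 ≤ b) (m : ℕ) :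
    (b ^ (2 * m) - 1) / (b - 1) = (b + 1) * ∑ i ∈ range m, (b ^ 2) ^ i := by
  have hsq : b ^ 2 - 1 = (b + 1) * (b - 1) := by
    simpa using sq_sub_sq b 1
  refine Nat.div_eq_of_eq_mul_left (by omega) ?_
  calc b ^ (2 * m) - 1 = (∑ i ∈ range m, (b ^ 2) ^ i) * (b ^ 2 - 1) := by
        rw [geom_sum_mul_of_one_le (one_le_pow _ _ (by omega)), pow_mul]
    _ = (b + 1) * (∑ i ∈ range m, (b ^ 2) ^ i) * (b - 1) := by rw [hsq]; ring

theorem sq_add_one_dvd_repunit_two_mul_iff {b : ℕ} (hb : 2 ≤ b) (m : ℕ) :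
    (b + 1) ^ 2 ∣ (b ^ (2 * m) - 1) / (b - 1) ↔ b + 1 ∣ m := by
  rw [repunit_two_mul hb, pow_two, Nat.mul_dvd_mul_iff_left b.succ_pos]
  exact (geom_sum_modEq_of_modEq_one b.sq_modEq_one_add_one m).dvd_iff dvd_rfl

end Nat

theorem repunit_dvd_121_iff_general (ℓ : ℕ) (he : Even ℓ) :
    121 ∣ (10 ^ ℓ - 1) / 9 ↔ 11 ∣ ℓ / 2 := by
  obtain ⟨m, rfl⟩ := he
  rw [← two_mul, Nat.mul_div_cancel_left m two_pos]
  exact Nat.sq_add_one_dvd_repunit_two_mul_iff (b := 10) (by norm_num) m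

theorem repunit_dvd_121_iff (ℓ : ℕ) (hℓ : 0 < ℓ) (he : Even ℓ) :
    121 ∣ (10 ^ ℓ - 1) / 9 ↔ 11 ∣ ℓ / 2 :=
  repunit_dvd_121_iff_general ℓ he
end
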